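/- Random restriction and biased Fourier coefficients: let f: {±1}ᵐ → ℝ, let μ ∈ (−1,1)ᵐ, set σ_i = √(1−μ_i²), and let ρ be the random restriction where independently each coordinate i is set to ⋆ with probability σ_i²/2, to 1 with probability (1+μ_i)²/4, and to −1 with probability (1−μ_i)²/4. Then for every S ⊆ [m], E_ρ[f̂_ρ(S)] = 2^{−|S|}·(∏_{i∈S} σ_i)·f̂^μ(S), where f̂_ρ(S) is the Fourier coefficient of the restricted function under the uniform measure and f̂^μ(S) is the Fourier coefficient of f in the μ-biased orthonormal basis φ^μ_S(x) = ∏_{i∈S}(x_i−μ_i)/σ_i. -/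

import Mathlib

/-!
Both sides equal `∑_y f(y) ∏_i κ_i(y_i)`, where `κ_i(b) = (1 + b μ_i)/2` for `i ∉ S` and
`κ_i(b) = (1 + b μ_i)/2 · (b - μ_i)/2` for `i ∈ S`. On the left, the pair (ρ, x) with `x` uniform
has product distribution and the evaluated point `ρ(x)` is computed coordinatewise, so its law
factors over the coordinates and a one-coordinate count gives `κ_i`. On the right, the factors
`σ_i` cancel against the normalisation of `φ^μ_S`.
-/

/-- The value ±1 associated to a boolean. -/
def toPM (b : Bool) : ℝ := if b then 1 else -1

/-- A restriction assigns to each coordinate either `none` (free, ⋆) or a fixed value ±1.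
`applyR r x` substitutes the fixed values, leaving `x` on free coordinates. -/
def applyR {m : ℕ} (r : Fin m → Option Bool) (x : Fin m → ℝ) : Fin m → ℝ :=
  fun i => match r i with
    | none => x i
    | some b => toPM b

/-- Fourier coefficient of `g` at `S` with respect to the uniform measure on {±1}^m. -/
noncomputable def hatU {m : ℕ} (g : (Fin m → ℝ) → ℝ) (S : Finset (Fin m)) : ℝ :=
  ((2:ℝ) ^ m)⁻¹ * ∑ x : Fin m → Bool, g (fun i => toPM (x i)) * ∏ i ∈ S, toPM (x i)

/-- Fourier coefficient of `f` at `S` in the μ-biased orthonormal basis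
φ^μ_S(x) = ∏_{i∈S} (x_i − μ_i)/σ_i, under the μ-biased product measure. -/
noncomputable def hatMu {m : ℕ} (μ : Fin m → ℝ) (f : (Fin m → ℝ) → ℝ) (S : Finset (Fin m)) : ℝ :=
  ∑ x : Fin m → Bool,
    (∏ i, (1 + toPM (x i) * μ i) / 2) * f (fun i => toPM (x i)) *
      ∏ i ∈ S, (toPM (x i) - μ i) / Real.sqrt (1 - (μ i) ^ 2)

/-- Probability weight of the outcome of coordinate `i` under the random restriction. -/
noncomputable def wR {m : ℕ} (μ : Fin m → ℝ) (i : Fin m) : Option Bool → ℝ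
  | none => (1 - (μ i) ^ 2) / 2
  | some true => (1 + μ i) ^ 2 / 4
  | some false => (1 - μ i) ^ 2 / 4

theorem Fintype.sum_sum_prod_mul_coordwise {ι α β γ R : Type*} [Fintype ι] [DecidableEq ι]
    [Fintype α] [Fintype β] [Fintype γ] [DecidableEq γ] [CommSemiring R]
    (w : ι → α → β → R) (g : ι → α → β → γ) (F : (ι → γ) → R) :
    ∑ r : ι → α, ∑ x : ι → β, (∏ i, w i (r i) (x i)) * F (fun i => g i (r i) (x i)) =
      ∑ y : ι → γ, F y * ∏ i, ∑ a, ∑ b, if g i a b = y i then w i a b else 0 := by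
  have fiber : ∀ y : ι → γ, ∏ i, ∑ a, ∑ b, (if g i a b = y i then w i a b else 0) =
      ∑ r : ι → α, ∑ x : ι → β,
        if (fun i => g i (r i) (x i)) = y then ∏ i, w i (r i) (x i) else 0 := by
    intro y
    simp_rw [Fintype.prod_sum, Finset.prod_ite_zero, Finset.mem_univ, true_implies, funext_iff]
  simp_rw [fiber, Finset.mul_sum, mul_ite, mul_zero]
  symm
  rw [Finset.sum_comm]
  refine Finset.sum_congr rfl fun r _ => ?_
  rw [Finset.sum_comm]
  simp only [Finset.sum_ite_eq, Finset.mem_univ, if_true, mul_comm]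

section

variable {m : ℕ} (μ : Fin m → ℝ) (S : Finset (Fin m))

lemma applyR_toPM (r : Fin m → Option Bool) (x : Fin m → Bool) :
    applyR r (fun i => toPM (x i)) = fun i => toPM ((r i).getD (x i)) := by
  funext i
  cases h : r i <;> simp [applyR, h]

noncomputable def biasedWeight (i : Fin m) (b : Bool) : ℝ :=
  (1 + toPM b * μ i) / 2 * if i ∈ S then (toPM b - μ i) / 2 else 1

lemma prod_wR_mul_hatU (f : (Fin m → ℝ) → ℝ) (r : Fin m → Option Bool) :
    (∏ i, wR μ i (r i)) * hatU (fun x => f (applyR r x)) S =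
      ∑ x : Fin m → Bool, (∏ i, wR μ i (r i) * (2⁻¹ * if i ∈ S then toPM (x i) else 1)) *
        f (fun i => toPM ((r i).getD (x i))) := by
  rw [hatU, ← mul_assoc, Finset.mul_sum]
  refine Finset.sum_congr rfl fun x _ => ?_
  simp only [applyR_toPM, Finset.prod_mul_distrib, Fintype.prod_extend_by_one, Finset.prod_const,
    Finset.card_univ, Fintype.card_fin, inv_pow]
  ring

lemma sum_sum_wR_getD (i : Fin m) (y : Bool) :
    ∑ a : Option Bool, ∑ b : Bool,
      (if a.getD b = y then wR μ i a * (2⁻¹ * if i ∈ S then toPM b else 1) else 0) =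
      biasedWeight μ S i y := by
  simp only [Fintype.sum_option, Fintype.sum_bool, biasedWeight]
  by_cases hi : i ∈ S <;> cases y <;> simp [wR, hi, toPM] <;> ring

lemma inv_two_pow_card_mul_prod_sqrt_mul_hatMu (hσ : ∀ i ∈ S, Real.sqrt (1 - μ i ^ 2) ≠ 0)
    (f : (Fin m → ℝ) → ℝ) :
    ((2:ℝ) ^ S.card)⁻¹ * (∏ i ∈ S, Real.sqrt (1 - μ i ^ 2)) * hatMu μ f S =
      ∑ y : Fin m → Bool, f (fun i => toPM (y i)) * ∏ i, biasedWeight μ S i (y i) := by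
  rw [hatMu, Finset.mul_sum]
  refine Finset.sum_congr rfl fun y _ => ?_
  have scale : ((2:ℝ) ^ S.card)⁻¹ * (∏ i ∈ S, Real.sqrt (1 - μ i ^ 2)) *
      ∏ i ∈ S, (toPM (y i) - μ i) / Real.sqrt (1 - μ i ^ 2) = ∏ i ∈ S, (toPM (y i) - μ i) / 2 := by
    rw [mul_assoc, ← Finset.prod_mul_distrib, Finset.prod_congr rfl fun i hi =>
      mul_div_cancel₀ (toPM (y i) - μ i) (hσ i hi)]
    rw [Finset.prod_div_distrib, Finset.prod_const, div_eq_inv_mul]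
  simp only [biasedWeight, Finset.prod_mul_distrib, Fintype.prod_extend_by_one, ← scale]
  ring

end

theorem stmt18 {m : ℕ} (f : (Fin m → ℝ) → ℝ) (μ : Fin m → ℝ)
    (hμ : ∀ i, μ i ∈ Set.Ioo (-1:ℝ) 1) (S : Finset (Fin m)) :
    (∑ r : Fin m → Option Bool, (∏ i, wR μ i (r i)) * hatU (fun x => f (applyR r x)) S) =
      ((2:ℝ) ^ S.card)⁻¹ * (∏ i ∈ S, Real.sqrt (1 - (μ i) ^ 2)) * hatMu μ f S := by
  have hσ (i : Fin m) (_ : i ∈ S) : Real.sqrt (1 - μ i ^ 2) ≠ 0 := by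
    obtain ⟨hlo, hhi⟩ := hμ i
    exact (Real.sqrt_pos.mpr (by nlinarith)).ne'
  simp_rw [prod_wR_mul_hatU]
  rw [Fintype.sum_sum_prod_mul_coordwise
    (fun i a b => wR μ i a * (2⁻¹ * if i ∈ S then toPM b else 1)) (fun _ a b => a.getD b)
    (fun y => f (fun i => toPM (y i)))]
  simp_rw [sum_sum_wR_getD, inv_two_pow_card_mul_prod_sqrt_mul_hatMu μ S hσ]
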